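/- arXiv:1106.3836 — 2 statements merged into one kernel-verified Lean document; each statement's English description precedes it below -/
import Mathlib

section
/- If X is a Tychonoff space which is neither a Baire space nor meager, then X is not homeomorphic to a remainder bG \ G of any Hausdorff compactification bG of any non-locally compact paratopological group G. -/
/-!
Left translations make a paratopological group `G` a homogeneous space.
If the remainder `Y = bG \ G` is not a Baire space, some nonempty open `V ⊆ bG` meets `Y` in a
meagre set, so `V ∩ G` contains a dense Gδ subset `P` of `V`. Being a Gδ in its closure inside a
compact Hausdorff space is a topological property (Čech-completeness), so carrying `P` along a
self-homeomorphism of `G` shows that every nonempty open set of `bG` contains a nonempty open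
set meeting `Y` in a meagre set. By the Banach category theorem `Y` is meagre in `bG`, and since
`G` is not locally compact `Y` is dense in `bG`, hence meagre in itself.
-/

open Set Topology Filter

universe u

section Category

variable {X : Type*} [TopologicalSpace X]

theorem exists_isOpen_isMeagre_of_not_baireSpace (h : ¬ BaireSpace X) :
    ∃ U : Set X, IsOpen U ∧ U.Nonempty ∧ IsMeagre U := by
  by_contra! hU
  refine h ⟨fun f hfo hfd => dense_iff_inter_open.2 fun U hUo hUne => ?_⟩
  by_contra hdisj
  refine hU U hUo hUne (mem_of_superset
    (countable_iInter_mem.2 fun n => residual_of_dense_open (hfo n) (hfd n)) ?_)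
  rw [subset_compl_iff_disjoint_left, disjoint_iff_inter_eq_empty]
  exact not_nonempty_iff_eq_empty.1 hdisj

theorem Dense.tendsto_val_residual {Y : Set X} (hY : Dense Y) :
    Tendsto ((↑) : Y → X) (residual Y) (residual X) := by
  refine le_countableGenerate_iff_of_countableInterFilter.2 ?_
  rintro t ⟨hto, htd⟩
  refine residual_of_dense_open (hto.preimage continuous_subtype_val) (Subtype.dense_iff.2 ?_)
  rw [Subtype.image_preimage_coe, (hY.inter_of_isOpen_right htd hto).closure_eq]
  exact subset_univ Y

theorem Dense.isMeagre_preimage_val {Y s : Set X} (hY : Dense Y) (hs : IsMeagre s) :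
    IsMeagre (((↑) : Y → X) ⁻¹' s) :=
  hY.tendsto_val_residual hs

theorem IsMeagre.exists_nat_isNowhereDense {s : Set X} (hs : IsMeagre s) :
    ∃ A : ℕ → Set X, (∀ n, IsNowhereDense (A n)) ∧ s ⊆ ⋃ n, A n := by
  obtain ⟨S, hSnd, hSc, hsS⟩ := isMeagre_iff_countable_union_isNowhereDense.1 hs
  obtain ⟨A, hA⟩ := (hSc.insert ∅).exists_eq_range (insert_nonempty ∅ S)
  refine ⟨A, fun n => ?_, hsS.trans fun x ⟨t, ht, hxt⟩ => ?_⟩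
  · have hAn : A n ∈ insert ∅ S := hA ▸ mem_range_self n
    rcases hAn with h | h
    · rw [h]; exact isNowhereDense_empty
    · exact hSnd _ h
  · obtain ⟨n, rfl⟩ : t ∈ range A := hA ▸ mem_insert_of_mem ∅ ht
    exact mem_iUnion.2 ⟨n, hxt⟩

theorem IsGδ.isMeagre_closure_diff {T A : Set X} (hT : IsGδ T) (hA : closure A ∩ T = A) :
    IsMeagre (closure A \ A) := by
  obtain ⟨O, hOo, rfl⟩ := hT.eq_iInter_nat
  refine (isMeagre_iUnion (f := fun n => frontier (O n)) fun n => ?_).mono fun x ⟨hxc, hxA⟩ => ?_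
  · exact (fun hs => ((isClosed_frontier).isNowhereDense_iff.2 hs).isMeagre)
      (frontier_compl (O n) ▸ interior_frontier (hOo n).isClosed_compl)
  · obtain ⟨n, hn⟩ : ∃ n, x ∉ O n := by
      by_contra! hxO
      exact hxA (hA ▸ ⟨hxc, mem_iInter.2 hxO⟩)
    have hAO : A ⊆ O n := hA ▸ inter_subset_right.trans (iInter_subset O n)
    exact mem_iUnion.2 ⟨n, (hOo n).frontier_eq ▸ ⟨closure_mono hAO hxc, hn⟩⟩

theorem isNowhereDense_biUnion_of_pairwiseDisjoint {F : Set (Set X)} (hFo : ∀ W ∈ F, IsOpen W)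
    (hF : F.PairwiseDisjoint id) {N : Set X → Set X} (hNW : ∀ W ∈ F, N W ⊆ W)
    (hN : ∀ W ∈ F, IsNowhereDense (N W)) : IsNowhereDense (⋃ W ∈ F, N W) := by
  refine eq_empty_iff_forall_notMem.2 fun x hx => ?_
  set M := interior (closure (⋃ W ∈ F, N W))
  obtain ⟨z, hzM, hz⟩ := mem_closure_iff.1 (interior_subset hx) M isOpen_interior hx
  obtain ⟨W, hWF, hzW⟩ := mem_iUnion₂.1 hz
  have hsub : W ∩ ⋃ W' ∈ F, N W' ⊆ N W := by
    rintro y ⟨hyW, hy⟩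
    obtain ⟨W', hW'F, hyW'⟩ := mem_iUnion₂.1 hy
    obtain rfl | hne := eq_or_ne W' W
    · exact hyW'
    · exact absurd hyW (disjoint_left.1 (hF hW'F hWF hne) (hNW W' hW'F hyW'))
  have hMW : M ∩ W ⊆ closure (N W) := fun y ⟨hyM, hyW⟩ =>
    closure_mono hsub ((hFo W hWF).inter_closure ⟨hyW, interior_subset hyM⟩)
  have := interior_maximal hMW (isOpen_interior.inter (hFo W hWF)) ⟨hzM, hNW W hWF hzW⟩
  rwa [hN W hWF] at this

theorem isMeagre_biUnion_of_pairwiseDisjoint {F : Set (Set X)} (hFo : ∀ W ∈ F, IsOpen W)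
    (hF : F.PairwiseDisjoint id) {N : Set X → Set X} (hNW : ∀ W ∈ F, N W ⊆ W)
    (hN : ∀ W ∈ F, IsMeagre (N W)) : IsMeagre (⋃ W ∈ F, N W) := by
  choose! A hAnd hNA using fun W hW => (hN W hW).exists_nat_isNowhereDense
  refine (isMeagre_iUnion fun n => (isNowhereDense_biUnion_of_pairwiseDisjoint hFo hF
    (N := fun W => A W n ∩ W) (fun W _ => inter_subset_right)
    fun W hW => (hAnd W hW n).mono inter_subset_left).isMeagre).mono ?_
  intro x hx
  obtain ⟨W, hWF, hxW⟩ := mem_iUnion₂.1 hx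
  obtain ⟨n, hxn⟩ := mem_iUnion.1 (hNA W hWF hxW)
  exact mem_iUnion.2 ⟨n, mem_iUnion₂.2 ⟨W, hWF, hxn, hNW W hWF hxW⟩⟩

/-- Banach category theorem: take a maximal disjoint family of open sets on which `s` is meagre. -/
theorem isMeagre_of_forall_exists_isMeagre_inter {s : Set X}
    (h : ∀ U, IsOpen U → U.Nonempty → ∃ W ⊆ U, IsOpen W ∧ W.Nonempty ∧ IsMeagre (W ∩ s)) :
    IsMeagre s := by
  let good : Set (Set (Set X)) :=
    {F | (∀ W ∈ F, IsOpen W ∧ IsMeagre (W ∩ s)) ∧ F.PairwiseDisjoint id}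
  obtain ⟨F, hF⟩ := zorn_subset good fun c hc hchain =>
    ⟨⋃₀ c, ⟨fun W ⟨F, hFc, hWF⟩ => (hc hFc).1 W hWF,
      (hchain.pairwiseDisjoint_sUnion id).2 fun F hFc => (hc hFc).2⟩,
      fun _ => subset_sUnion_of_mem⟩
  have hFo : ∀ W ∈ F, IsOpen W := fun W hW => (hF.prop.1 W hW).1
  have hdense : Dense (⋃₀ F) := by
    refine dense_iff_inter_open.2 fun U hUo hUne => ?_
    by_contra hdisj
    obtain ⟨W, hWU, hWo, hWne, hWs⟩ := h U hUo hUne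
    have hWF : Disjoint W (⋃₀ F) :=
      disjoint_iff_inter_eq_empty.2 (subset_empty_iff.1 fun x ⟨hxW, hxF⟩ =>
        hdisj ⟨x, hWU hxW, hxF⟩)
    have hins : insert W F ∈ good := by
      refine ⟨forall_mem_insert.2 ⟨⟨hWo, hWs⟩, hF.prop.1⟩, hF.prop.2.insert fun V hV _ => ?_⟩
      exact hWF.mono_right (subset_sUnion_of_mem hV)
    have hWmem : W ∈ F := hF.2 hins (subset_insert W F) (mem_insert W F)
    obtain ⟨x, hx⟩ := hWne
    exact disjoint_left.1 hWF hx ⟨W, hWmem, hx⟩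
  have hcompl : IsNowhereDense (⋃₀ F)ᶜ :=
    (isClosed_isNowhereDense_iff_compl.2 ⟨by simpa using isOpen_sUnion hFo,
      by simpa using hdense⟩).2
  refine (hcompl.isMeagre.union (isMeagre_biUnion_of_pairwiseDisjoint hFo hF.prop.2
    (N := fun W => W ∩ s) (fun _ _ => inter_subset_left) fun W hW => (hF.prop.1 W hW).2)).mono ?_
  intro x hx
  by_cases hxF : x ∈ ⋃₀ F
  · obtain ⟨W, hWF, hxW⟩ := hxF
    exact Or.inr (mem_iUnion₂.2 ⟨W, hWF, hxW, hx⟩)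
  · exact Or.inl hxF

end Category

section Transfer

variable {X B C : Type*} [TopologicalSpace X] [TopologicalSpace B] [TopologicalSpace C]

theorem eq_of_mem_closure_image_prodMk [T2Space C] {i : X → B} {j : X → C} (hi : IsInducing i)
    (hj : Continuous j) {S : Set X} {x : X} {c : C}
    (h : (i x, c) ∈ closure ((fun y => (i y, j y)) '' S)) : c = j x := by
  set φ : X → B × C := fun y => (i y, j y)
  have hne : (𝓝[φ '' S] (i x, c)).NeBot := mem_closure_iff_nhdsWithin_neBot.1 h
  have hlne : (comap φ (𝓝[φ '' S] (i x, c))).NeBot :=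
    hne.comap_of_image_mem self_mem_nhdsWithin
  have hφ : Tendsto φ (comap φ (𝓝[φ '' S] (i x, c))) (𝓝 (i x, c)) :=
    tendsto_comap.mono_right nhdsWithin_le_nhds
  have hx : Tendsto id (comap φ (𝓝[φ '' S] (i x, c))) (𝓝 x) :=
    hi.tendsto_nhds_iff.2 ((continuous_fst.tendsto _).comp hφ)
  exact tendsto_nhds_unique ((continuous_snd.tendsto _).comp hφ) ((hj.tendsto x).comp hx)

theorem exists_isGδ_closure_inter_image_eq [CompactSpace B] [T2Space B] [CompactSpace C]
    [T2Space C] {i : X → B} {j : X → C} (hi : IsInducing i) (hj : IsInducing j) {S : Set X}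
    {T : Set B} (hT : IsGδ T) (hS : closure (i '' S) ∩ T = i '' S) :
    ∃ T' : Set C, IsGδ T' ∧ closure (j '' S) ∩ T' = j '' S := by
  obtain ⟨O, hOo, rfl⟩ := hT.eq_iInter_nat
  -- Over `i '' S` and over `j '' S` the closure `K` of the graph of `j ∘ i⁻¹` is still a graph.
  set K := closure ((fun y => (i y, j y)) '' S)
  have hK : IsCompact K := isClosed_closure.isCompact
  have hKi : ∀ {x c}, (i x, c) ∈ K → c = j x := eq_of_mem_closure_image_prodMk hi hj.continuous
  have hKj : ∀ {x b}, (b, j x) ∈ K → b = i x := fun {x b} h =>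
    eq_of_mem_closure_image_prodMk hj hi.continuous (S := S) (by
      have := mem_image_of_mem (Homeomorph.prodComm B C) h
      rwa [Homeomorph.image_closure, ← image_comp] at this)
  refine ⟨⋂ n, (Prod.snd '' (K ∩ Prod.fst ⁻¹' (O n)ᶜ))ᶜ, .iInter_of_isOpen fun n =>
    ((hK.inter_right ((hOo n).isClosed_compl.preimage continuous_fst)).image
      continuous_snd).isClosed.isOpen_compl, Subset.antisymm ?_ ?_⟩
  · rintro c ⟨hc, hcT'⟩
    have hjS : j '' S ⊆ Prod.snd '' K := fun _ ⟨x, hx, hc⟩ =>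
      ⟨(i x, j x), subset_closure (mem_image_of_mem _ hx), hc⟩
    obtain ⟨⟨b, c⟩, hbc, rfl⟩ := closure_minimal hjS (hK.image continuous_snd).isClosed hc
    have hb : b ∈ closure (i '' S) := by
      have := image_closure_subset_closure_image continuous_fst (mem_image_of_mem Prod.fst hbc)
      rwa [← image_comp] at this
    have hbO : b ∈ ⋂ n, O n := mem_iInter.2 fun n => by
      by_contra hbn
      exact mem_iInter.1 hcT' n ⟨(b, c), ⟨hbc, hbn⟩, rfl⟩
    obtain ⟨x, hxS, rfl⟩ : b ∈ i '' S := hS ▸ ⟨hb, hbO⟩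
    exact ⟨x, hxS, (hKi hbc).symm⟩
  · rintro _ ⟨x, hxS, rfl⟩
    refine ⟨subset_closure ⟨x, hxS, rfl⟩, mem_iInter.2 fun n ⟨⟨b, c⟩, ⟨hbc, hbn⟩, hc⟩ => ?_⟩
    obtain rfl : c = j x := hc
    have hxO : i x ∈ ⋂ n, O n := (hS.symm ▸ ⟨x, hxS, rfl⟩ : i x ∈ closure (i '' S) ∩ _).2
    exact hbn (hKj hbc ▸ mem_iInter.1 hxO n)

end Transfer

def IsHomogeneous (X : Type*) [TopologicalSpace X] : Prop :=
  ∀ x y : X, ∃ h : X ≃ₜ X, h x = y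

theorem isHomogeneous_of_group (G : Type*) [TopologicalSpace G] [Group G]
    [SeparatelyContinuousMul G] : IsHomogeneous G :=
  fun x y => ⟨Homeomorph.mulLeft (y * x⁻¹), inv_mul_cancel_right y x⟩

section Homogeneous

variable {X B : Type*} [TopologicalSpace X] [TopologicalSpace B]

theorem Topology.IsEmbedding.exists_compact_nhds_subset [LocallyCompactSpace B] {e : X → B}
    (he : IsEmbedding e) {x₀ : X} (hx₀ : range e ∈ 𝓝 (e x₀)) :
    ∀ n ∈ 𝓝 x₀, ∃ s ∈ 𝓝 x₀, s ⊆ n ∧ IsCompact s := by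
  intro n hn
  obtain ⟨n', hn', hn'n⟩ := (he.isInducing.nhds_eq_comap x₀ ▸ hn : n ∈ comap e (𝓝 (e x₀)))
  obtain ⟨K, hK, hKn, hKc⟩ := local_compact_nhds (inter_mem hn' hx₀)
  refine ⟨e ⁻¹' K, he.continuous.continuousAt.preimage_mem_nhds hK,
    (preimage_mono (hKn.trans inter_subset_left)).trans hn'n, he.isCompact_iff.2 ?_⟩
  rwa [image_preimage_eq_of_subset (hKn.trans inter_subset_right)]

namespace IsHomogeneous

theorem locallyCompactSpace (hX : IsHomogeneous X) {x₀ : X}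
    (h₀ : ∀ n ∈ 𝓝 x₀, ∃ s ∈ 𝓝 x₀, s ⊆ n ∧ IsCompact s) : LocallyCompactSpace X := by
  refine ⟨fun x n hn => ?_⟩
  obtain ⟨h, rfl⟩ := hX x₀ x
  obtain ⟨s, hs, hsn, hsc⟩ := h₀ _ (h.continuous.continuousAt.preimage_mem_nhds hn)
  exact ⟨h '' s, h.isOpenMap.image_mem_nhds hs, image_subset_iff.2 hsn, hsc.image h.continuous⟩

theorem dense_compl_range [LocallyCompactSpace B] (hX : IsHomogeneous X)
    (hX' : ¬ LocallyCompactSpace X) {e : X → B} (he : IsEmbedding e) : Dense (range e)ᶜ := by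
  rw [← interior_eq_empty_iff_dense_compl, ← not_nonempty_iff_eq_empty]
  rintro ⟨_, hx₀⟩
  obtain ⟨x₀, rfl⟩ := interior_subset hx₀
  exact hX' (hX.locallyCompactSpace
    (he.exists_compact_nhds_subset (mem_interior_iff_mem_nhds.1 hx₀)))

theorem exists_isMeagre_inter_compl_range [CompactSpace B] [T2Space B] (hX : IsHomogeneous X)
    {e : X → B} (he : IsEmbedding e) (hd : DenseRange e) {V : Set B} (hVo : IsOpen V)
    (hVne : V.Nonempty) (hV : IsMeagre (V ∩ (range e)ᶜ)) {U : Set B} (hUo : IsOpen U)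
    (hUne : U.Nonempty) : ∃ W ⊆ U, IsOpen W ∧ W.Nonempty ∧ IsMeagre (W ∩ (range e)ᶜ) := by
  obtain ⟨T, hTV, hT, hTd⟩ := mem_residual.1 hV
  have hPe : V ∩ T ⊆ range e := fun b ⟨hbV, hbT⟩ => by
    by_contra hb
    exact hTV hbT ⟨hbV, hb⟩
  have hVP : V ⊆ closure (V ∩ T) := hTd.open_subset_closure_inter hVo
  obtain ⟨x₀, hx₀⟩ := hd.exists_mem_open hUo hUne
  obtain ⟨_, hp₀⟩ := hTd.inter_open_nonempty V hVo hVne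
  obtain ⟨p₀, rfl⟩ := hPe hp₀
  obtain ⟨h, rfl⟩ := hX p₀ x₀
  set S := e ⁻¹' (V ∩ T)
  have heS : e '' S = V ∩ T := image_preimage_eq_of_subset hPe
  obtain ⟨T', hT', hS'⟩ := exists_isGδ_closure_inter_image_eq he.isInducing
    (he.comp h.isEmbedding).isInducing (hVo.isGδ.inter hT) (S := S)
    (by rw [heS, inter_eq_right.2 subset_closure])
  have hVS : e ⁻¹' V ⊆ closure S := by
    rw [he.isInducing.closure_eq_preimage_closure_image, heS]
    exact preimage_mono hVP
  obtain ⟨W', hW'o, hW'⟩ := he.isInducing.isOpen_iff.1 (h.isOpenMap _ (hVo.preimage he.continuous))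
  have hW'S : W' ⊆ closure ((e ∘ h) '' S) :=
    calc W' ⊆ closure (W' ∩ range e) := hd.open_subset_closure_inter hW'o
      _ = closure (e '' (h '' (e ⁻¹' V))) := by rw [← hW', image_preimage_eq_inter_range]
      _ ⊆ closure (e '' closure (h '' S)) :=
        closure_mono (image_mono (h.image_closure S ▸ image_mono hVS))
      _ ⊆ closure ((e ∘ h) '' S) := by
        rw [image_comp]
        exact closure_minimal (image_closure_subset_closure_image he.continuous) isClosed_closure
  refine ⟨W' ∩ U, inter_subset_right, hW'o.inter hUo, ⟨e (h p₀), ?_, hx₀⟩,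
    (hT'.isMeagre_closure_diff hS').mono ?_⟩
  · show h p₀ ∈ e ⁻¹' W'
    rw [hW']
    exact mem_image_of_mem h hp₀.1
  · rintro b ⟨⟨hbW', -⟩, hbe⟩
    exact ⟨hW'S hbW', fun ⟨x, _, hx⟩ => hbe ⟨h x, hx⟩⟩

theorem isMeagre_compl_range_of_not_baireSpace [CompactSpace B] [T2Space B]
    (hX : IsHomogeneous X) {e : X → B} (he : IsEmbedding e) (hd : DenseRange e)
    (hnb : ¬ BaireSpace ↥(range e)ᶜ) : IsMeagre (range e)ᶜ := by
  obtain ⟨U, hUo, ⟨y, hy⟩, hU⟩ := exists_isOpen_isMeagre_of_not_baireSpace hnb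
  obtain ⟨V, hVo, rfl⟩ := isOpen_induced_iff.1 hUo
  have hV : IsMeagre (V ∩ (range e)ᶜ) := by
    simpa only [Subtype.image_preimage_coe, inter_comm] using hU.image_val
  exact isMeagre_of_forall_exists_isMeagre_inter fun W hWo hWne =>
    hX.exists_isMeagre_inter_compl_range he hd hVo ⟨y, hy⟩ hV hWo hWne

end IsHomogeneous

end Homogeneous

/-- a Tychonoff space which is neither Baire nor meager in itself is not
homeomorphic to a remainder of any Hausdorff compactification of any non-locally compact
paratopological group. -/
theorem stmt3 {X : Type u} [TopologicalSpace X]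
    (h1 : ¬ BaireSpace X) (h2 : ¬ IsMeagre (Set.univ : Set X)) :
    ¬ ∃ (G : Type u) (tG : TopologicalSpace G) (gG : Group G) (B : Type u)
        (tB : TopologicalSpace B) (e : G → B), by
        haveI := tG; haveI := gG; haveI := tB
        exact ContinuousMul G ∧ T35Space G ∧ ¬ LocallyCompactSpace G ∧
          CompactSpace B ∧ T2Space B ∧ Topology.IsEmbedding e ∧ DenseRange e ∧
          Nonempty (X ≃ₜ ((Set.range e)ᶜ : Set B)) := by
  rintro ⟨G, tG, gG, B, tB, e, hG, -, hGlc, hB, hB2, he, hd, ⟨φ⟩⟩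
  have hhom := isHomogeneous_of_group G
  have hmeagre := (hhom.dense_compl_range hGlc he).isMeagre_preimage_val
    (hhom.isMeagre_compl_range_of_not_baireSpace he hd fun _ => h1 φ.symm.baireSpace)
  rw [Subtype.coe_preimage_self] at hmeagre
  exact h2 (by simpa using hmeagre.preimage_of_isOpenMap φ.continuous φ.isOpenMap)
end

section
/- If X is a Tychonoff space which is neither a Baire space nor Lindelöf, then X is not homeomorphic to a remainder of any Hausdorff compactification of any non-locally compact paratopological group. -/
/-!
Let `Y = B \ e(G)` be the remainder. By homogeneity `G` is nowhere locally compact, so `Y` is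
dense in `B`, and a failure of the Baire property in `Y` produces a nonempty Gδ subset of `B`
missing `Y`. Inside it sits a nonempty compact set `K ⊆ G` of countable character in `B`, hence
in `G`. A tube-lemma argument shows that for every compact `F ⊆ G` and `k ∈ K` the compact set
`F k⁻¹ K ⊇ F` still has countable character in `G`, and density of `G` in `B` transfers this to
`B`. A compact set of countable character in `B` is a Gδ, so its complement is σ-compact.
Given an open `U ⊇ Y`, applying this to `F = B \ U ⊆ G` yields a σ-compact set between `Y` and
`U`, which makes `Y` Lindelöf.
-/

open Set Topology Filter Pointwise

universe u

section Group

variable {G : Type*} [TopologicalSpace G]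

theorem exists_mem_nhdsSet_mul_subset [Mul G] [ContinuousMul G] {F K U : Set G}
    (hF : IsCompact F) (hK : IsCompact K) (hU : IsOpen U) (hFK : F * K ⊆ U) :
    ∃ V ∈ 𝓝ˢ K, F * V ⊆ U := by
  obtain ⟨u, v, -, hv, hFu, hKv, huv⟩ := generalized_tube_lemma hF hK
    (hU.preimage continuous_mul) fun p hp => hFK (mul_mem_mul hp.1 hp.2)
  exact ⟨v, hv.mem_nhdsSet.2 hKv, (mul_subset_mul_right hFu).trans
    (mul_subset_iff.2 fun a ha b hb => huv (mk_mem_prod ha hb))⟩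

variable [Group G]

theorem IsCompact.weaklyLocallyCompactSpace_of_mem_nhds_of_group [SeparatelyContinuousMul G]
    {K : Set G} (hK : IsCompact K) {x : G} (h : K ∈ 𝓝 x) : WeaklyLocallyCompactSpace G :=
  ⟨fun y => ⟨(y * x⁻¹) • K, hK.smul _, by
    rw [← preimage_smul_inv]
    exact (continuous_const_smul _).continuousAt.preimage_mem_nhds (by simpa using h)⟩⟩

theorem mul_mem_nhdsSet_mul [SeparatelyContinuousMul G] (F : Set G) {K W : Set G}
    (hW : W ∈ 𝓝ˢ K) : F * W ∈ 𝓝ˢ (F * K) := by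
  obtain ⟨U, hU, hKU, hUW⟩ := mem_nhdsSet_iff_exists.1 hW
  exact mem_nhdsSet_iff_exists.2
    ⟨F * U, hU.mul_left, mul_subset_mul_left hKU, mul_subset_mul_left hUW⟩

variable [ContinuousMul G]

theorem Filter.HasBasis.nhdsSet_mul_left {ι : Sort*} {p : ι → Prop} {s : ι → Set G}
    {F K : Set G} (hF : IsCompact F) (hK : IsCompact K) (h : (𝓝ˢ K).HasBasis p s) :
    (𝓝ˢ (F * K)).HasBasis p fun i => F * s i := by
  refine ⟨fun t => ⟨fun ht => ?_, fun ⟨i, hi, hit⟩ =>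
    mem_of_superset (mul_mem_nhdsSet_mul F (h.mem_of_mem hi)) hit⟩⟩
  obtain ⟨U, hU, hFKU, hUt⟩ := mem_nhdsSet_iff_exists.1 ht
  obtain ⟨V, hV, hFV⟩ := exists_mem_nhdsSet_mul_subset hF hK hU hFKU
  obtain ⟨i, hi, hiV⟩ := h.mem_iff.1 hV
  exact ⟨i, hi, (mul_subset_mul_left hiV).trans (hFV.trans hUt)⟩

theorem IsCompact.isCountablyGenerated_nhdsSet_mul {F K : Set G} (hF : IsCompact F)
    (hK : IsCompact K) (hKc : (𝓝ˢ K).IsCountablyGenerated) :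
    (𝓝ˢ (F * K)).IsCountablyGenerated := by
  obtain ⟨s, hs⟩ := (𝓝ˢ K).exists_antitone_basis
  exact (hs.toHasBasis.nhdsSet_mul_left hF hK).isCountablyGenerated

theorem exists_isCompact_superset_isCountablyGenerated_nhdsSet {K : Set G} (hK : IsCompact K)
    (hKne : K.Nonempty) (hKc : (𝓝ˢ K).IsCountablyGenerated) {F : Set G} (hF : IsCompact F) :
    ∃ C, F ⊆ C ∧ IsCompact C ∧ (𝓝ˢ C).IsCountablyGenerated := by
  obtain ⟨k, hk⟩ := hKne
  have hFk : IsCompact (F * {k⁻¹}) := hF.mul isCompact_singleton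
  exact ⟨F * {k⁻¹} * K, fun x hx => ⟨x * k⁻¹, mul_mem_mul hx rfl, k, hk, inv_mul_cancel_right x k⟩,
    hFk.mul hK, hFk.isCountablyGenerated_nhdsSet_mul hK hKc⟩

end Group

section

variable {X Y : Type*} [TopologicalSpace X] [TopologicalSpace Y]

theorem isCountablyGenerated_nhdsSet_iInter [T2Space X] {C : ℕ → Set X}
    (hc : ∀ n, IsCompact (C n)) (hC : ∀ n, C (n + 1) ⊆ interior (C n)) :
    (𝓝ˢ (⋂ n, C n)).IsCountablyGenerated := by
  have hanti : Antitone C := antitone_nat_of_succ_le fun n => (hC n).trans interior_subset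
  have : 𝓝ˢ (⋂ n, C n) = ⨅ n, 𝓟 (C n) := by
    refine le_antisymm (le_iInf fun n => le_principal_iff.2 ?_) fun U hU => ?_
    · exact subset_interior_iff_mem_nhdsSet.1 ((iInter_subset _ (n + 1)).trans (hC n))
    · obtain ⟨n, hn⟩ := exists_subset_nhds_of_isCompact' hanti.directed_ge hc
        (fun n => (hc n).isClosed) (mem_nhdsSet_iff_forall.1 hU)
      exact mem_iInf_of_mem n hn
  rw [this]
  infer_instance

theorem IsGδ.exists_isCompact_isCountablyGenerated_nhdsSet [CompactSpace X] [T2Space X]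
    {S : Set X} (hS : IsGδ S) {x : X} (hx : x ∈ S) :
    ∃ K, x ∈ K ∧ K ⊆ S ∧ IsCompact K ∧ (𝓝ˢ K).IsCountablyGenerated := by
  obtain ⟨U, hUo, rfl⟩ := isGδ_iff_eq_iInter_nat.1 hS
  have step : ∀ n, ∀ N ∈ 𝓝 x, ∃ N' ∈ 𝓝 x, IsClosed N' ∧ N' ⊆ interior N ∩ U n :=
    fun n N hN => exists_mem_nhds_isClosed_subset
      (inter_mem (interior_mem_nhds.2 hN) ((hUo n).mem_nhds (mem_iInter.1 hx n)))
  choose! f hfx hfc hfs using step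
  let C : ℕ → Set X := fun n => Nat.rec univ (fun n N => f n N) n
  have hCx : ∀ n, C n ∈ 𝓝 x := fun n => by
    induction n with
    | zero => exact univ_mem
    | succ n ih => exact hfx n _ ih
  have hCs : ∀ n, C (n + 1) ⊆ interior (C n) ∩ U n := fun n => hfs n _ (hCx n)
  have hCc : ∀ n, IsClosed (C n) := fun n => by
    cases n with
    | zero => exact isClosed_univ
    | succ n => exact hfc n _ (hCx n)
  exact ⟨⋂ n, C n, mem_iInter.2 fun n => mem_of_mem_nhds (hCx n),
    subset_iInter fun n => (iInter_subset _ (n + 1)).trans fun y hy => (hCs n hy).2,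
    (isClosed_iInter hCc).isCompact,
    isCountablyGenerated_nhdsSet_iInter (fun n => (hCc n).isCompact)
      fun n y hy => (hCs n hy).1⟩

theorem exists_nonempty_isGδ_subset_compl_of_not_baireSpace [BaireSpace X] {s : Set X}
    (hs : Dense s) (h : ¬ BaireSpace s) : ∃ S, IsGδ S ∧ S.Nonempty ∧ S ⊆ sᶜ := by
  obtain ⟨f, hfo, hfd, hf⟩ : ∃ f : ℕ → Set s,
      (∀ n, IsOpen (f n)) ∧ (∀ n, Dense (f n)) ∧ ¬ Dense (⋂ n, f n) := by
    by_contra! H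
    exact h ⟨H⟩
  choose U hUo hU using fun n => isOpen_induced_iff.1 (hfo n)
  have hUd : ∀ n, Dense (U n) := fun n =>
    (hs.denseRange_val.dense_image continuous_subtype_val (hfd n)).mono
      (by rw [← hU n]; exact image_preimage_subset _ _)
  obtain ⟨N, hNo, ⟨y, hyN⟩, hN⟩ : ∃ N, IsOpen N ∧ N.Nonempty ∧ N ∩ ⋂ n, f n = ∅ := by
    simpa [dense_iff_inter_open, not_nonempty_iff_eq_empty] using hf
  obtain ⟨V, hVo, rfl⟩ := isOpen_induced_iff.1 hNo
  refine ⟨V ∩ ⋂ n, U n, hVo.isGδ.inter (.iInter_of_isOpen hUo),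
    inter_comm V _ ▸ (dense_iInter_of_isOpen hUo hUd).inter_open_nonempty V hVo ⟨y, hyN⟩, ?_⟩
  rintro x ⟨hxV, hxU⟩ hxs
  have : (⟨x, hxs⟩ : s) ∈ Subtype.val ⁻¹' V ∩ ⋂ n, f n :=
    ⟨hxV, mem_iInter.2 fun n => hU n ▸ mem_iInter.1 hxU n⟩
  simp [hN] at this

theorem Topology.IsInducing.isCountablyGenerated_nhdsSet_preimage {f : X → Y}
    (hf : IsInducing f) {K : Set Y} (hK : K ⊆ range f) (hKc : (𝓝ˢ K).IsCountablyGenerated) :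
    (𝓝ˢ (f ⁻¹' K)).IsCountablyGenerated := by
  rw [hf.nhdsSet_eq_comap, image_preimage_eq_of_subset hK]
  infer_instance

theorem DenseRange.isCountablyGenerated_nhdsSet [NormalSpace Y] {α : Type*} {e : α → Y}
    (he : DenseRange e) {C : Set Y} (hC : IsClosed C) (h : (comap e (𝓝ˢ C)).IsCountablyGenerated) :
    (𝓝ˢ C).IsCountablyGenerated := by
  obtain ⟨U, hU, hbasis⟩ := ((hasBasis_nhdsSet C).comap e).exists_antitone_subbasis
  refine HasBasis.isCountablyGenerated (p := fun _ : ℕ => True) (s := fun n => closure (U n))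
    ⟨fun t => ⟨fun ht => ?_, fun ⟨n, _, hn⟩ =>
      mem_of_superset ((hU n).1.mem_nhdsSet.2 (hU n).2) (subset_closure.trans hn)⟩⟩
  obtain ⟨V, ⟨hV, hVc⟩, hVt⟩ := (closed_nhdsSet_basis C hC).mem_iff.1 ht
  obtain ⟨n, hn⟩ := hbasis.mem_iff.1 (preimage_mem_comap hV)
  have hUV : U n ⊆ V := (he.open_subset_closure_inter (hU n).1).trans <|
    closure_minimal (by rintro _ ⟨hy, a, rfl⟩; exact hn hy) hVc
  exact ⟨n, trivial, (closure_minimal hUV hVc).trans hVt⟩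

theorem isGδ_of_isCountablyGenerated_nhdsSet [T1Space X] {C : Set X}
    (h : (𝓝ˢ C).IsCountablyGenerated) : IsGδ C := by
  obtain ⟨U, hU, hbasis⟩ := (hasBasis_nhdsSet C).exists_antitone_subbasis
  suffices C = ⋂ n, U n from this ▸ .iInter_of_isOpen fun n => (hU n).1
  refine (subset_iInter fun n => (hU n).2).antisymm fun x hx => by_contra fun hxC => ?_
  obtain ⟨n, hn⟩ := hbasis.mem_iff.1
    (isOpen_compl_singleton.mem_nhdsSet.2 (subset_compl_singleton_iff.2 hxC))
  exact hn (mem_iInter.1 hx n) rfl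

theorem IsGδ.isSigmaCompact_compl [CompactSpace X] {C : Set X} (hC : IsGδ C) :
    IsSigmaCompact Cᶜ := by
  obtain ⟨U, hU, rfl⟩ := isGδ_iff_eq_iInter_nat.1 hC
  rw [compl_iInter]
  exact isSigmaCompact_iUnion_of_isCompact _ fun n => (hU n).isClosed_compl.isCompact

theorem isLindelof_of_forall_isOpen_superset {s : Set X}
    (h : ∀ U, IsOpen U → s ⊆ U → ∃ L, IsLindelof L ∧ s ⊆ L ∧ L ⊆ U) : IsLindelof s := by
  refine isLindelof_iff_countable_subcover.2 fun V hV hsV => ?_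
  obtain ⟨L, hL, hsL, hLV⟩ := h _ (isOpen_iUnion hV) hsV
  obtain ⟨r, hr, hLr⟩ := hL.elim_countable_subcover V hV hLV
  exact ⟨r, hr, hsL.trans hLr⟩

end

theorem Topology.IsEmbedding.dense_compl_range_of_not_locallyCompactSpace {G B : Type*}
    [TopologicalSpace G] [Group G] [SeparatelyContinuousMul G] [R1Space G] [TopologicalSpace B]
    [LocallyCompactSpace B] {e : G → B} (he : IsEmbedding e) (hG : ¬ LocallyCompactSpace G) :
    Dense (range e)ᶜ := by
  rw [← interior_eq_empty_iff_dense_compl, eq_empty_iff_forall_notMem]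
  intro y hy
  obtain ⟨g, rfl⟩ := interior_subset hy
  obtain ⟨N, hN, hNe, hNc⟩ := local_compact_nhds (isOpen_interior.mem_nhds hy)
  have := (he.isInducing.isCompact_preimage' hNc (hNe.trans interior_subset)
    ).weaklyLocallyCompactSpace_of_mem_nhds_of_group
      (he.continuous.continuousAt.preimage_mem_nhds hN)
  exact hG inferInstance

theorem isLindelof_compl_range_of_isCountablyGenerated_nhdsSet {G B : Type*}
    [TopologicalSpace G] [Group G] [ContinuousMul G] [TopologicalSpace B] [CompactSpace B]
    [T2Space B] {e : G → B} (he : IsEmbedding e) (hd : DenseRange e) {K : Set G}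
    (hK : IsCompact K) (hKne : K.Nonempty) (hKc : (𝓝ˢ K).IsCountablyGenerated) :
    IsLindelof (range e)ᶜ := by
  refine isLindelof_of_forall_isOpen_superset fun U hU hYU => ?_
  have hUe : Uᶜ ⊆ range e := compl_subset_comm.1 hYU
  obtain ⟨C, hUC, hC, hCc⟩ := exists_isCompact_superset_isCountablyGenerated_nhdsSet hK hKne hKc
    (he.isInducing.isCompact_preimage' hU.isClosed_compl.isCompact hUe)
  have hCB : (𝓝ˢ (e '' C)).IsCountablyGenerated :=
    hd.isCountablyGenerated_nhdsSet (hC.image he.continuous).isClosed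
      (he.isInducing.nhdsSet_eq_comap C ▸ hCc)
  refine ⟨(e '' C)ᶜ, (isGδ_of_isCountablyGenerated_nhdsSet hCB).isSigmaCompact_compl.isLindelof,
    compl_subset_compl.2 (image_subset_range e C), compl_subset_comm.1 ?_⟩
  calc Uᶜ = e '' (e ⁻¹' Uᶜ) := (image_preimage_eq_of_subset hUe).symm
    _ ⊆ e '' C := image_mono hUC

/-- a Tychonoff space which is neither Baire nor Lindelöf is not
homeomorphic to a remainder of any Hausdorff compactification of any non-locally compact
paratopological group. -/
theorem stmt4 {X : Type u} [TopologicalSpace X]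
    (h1 : ¬ BaireSpace X) (h2 : ¬ LindelofSpace X) :
    ¬ ∃ (G : Type u) (tG : TopologicalSpace G) (gG : Group G) (B : Type u)
        (tB : TopologicalSpace B) (e : G → B), by
        haveI := tG; haveI := gG; haveI := tB
        exact ContinuousMul G ∧ T35Space G ∧ ¬ LocallyCompactSpace G ∧
          CompactSpace B ∧ T2Space B ∧ Topology.IsEmbedding e ∧ DenseRange e ∧
          Nonempty (X ≃ₜ ((Set.range e)ᶜ : Set B)) := by
  rintro ⟨G, tG, gG, B, tB, e, _, _, hG, _, _, he, hd, ⟨φ⟩⟩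
  obtain ⟨S, hS, ⟨x, hxS⟩, hSe⟩ := exists_nonempty_isGδ_subset_compl_of_not_baireSpace
    (he.dense_compl_range_of_not_locallyCompactSpace hG) fun _ => h1 φ.symm.baireSpace
  obtain ⟨K, hxK, hKS, hK, hKc⟩ := hS.exists_isCompact_isCountablyGenerated_nhdsSet hxS
  have hKe : K ⊆ range e := compl_compl (range e) ▸ hKS.trans hSe
  obtain ⟨g, rfl⟩ := hKe hxK
  have := isLindelof_iff_lindelofSpace.1 <| isLindelof_compl_range_of_isCountablyGenerated_nhdsSet
    he hd (he.isInducing.isCompact_preimage' hK hKe) ⟨g, hxK⟩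
    (he.isInducing.isCountablyGenerated_nhdsSet_preimage hKe hKc)
  exact h2 (.of_continuous_surjective φ.symm.continuous φ.symm.surjective)
end
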